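/- arXiv:1902.06582 — 2 statements merged into one kernel-verified Lean document; each statement's English description precedes it below -/
import Mathlib

section
/- Let A = A'⊕A'', B = B'⊕B'', C = C'⊕C'' over a field k, let p' ∈ A'⊗B'⊗C' and p'' ∈ A''⊗B''⊗C'', and set W' = p'((A')*) ⊆ B'⊗C' and W'' = p''((A'')*) ⊆ B''⊗C''. Then the additivity of the rank holds for p = p'⊕p'', i.e. R(p) = R(p') + R(p''), if and only if the additivity of the rank holds for W = W'⊕W'', i.e. R(W) = R(W') + R(W''). -/
open TensorProduct Module

noncomputable section

variable (k : Type*) [Field k]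

/-- The rank of a three-way tensor: the minimal number `r` of simple (rank-one)
tensors such that `p` is a linear combination of `r` of them. -/
def tRank {A B C : Type*} [AddCommGroup A] [Module k A] [AddCommGroup B] [Module k B]
    [AddCommGroup C] [Module k C] (p : A ⊗[k] (B ⊗[k] C)) : ℕ :=
  sInf {r : ℕ | ∃ (a : Fin r → A) (b : Fin r → B) (c : Fin r → C),
    p = ∑ i, a i ⊗ₜ[k] (b i ⊗ₜ[k] c i)}

/-- The rank of a linear subspace `W ⊆ B⊗C`: the minimal number `r` of rank-one
tensors whose span contains `W`. -/
def sRank {B C : Type*} [AddCommGroup B] [Module k B]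
    [AddCommGroup C] [Module k C] (W : Submodule k (B ⊗[k] C)) : ℕ :=
  sInf {r : ℕ | ∃ (b : Fin r → B) (c : Fin r → C),
    W ≤ Submodule.span k (Set.range fun i => b i ⊗ₜ[k] c i)}

/-- Contraction of a tensor in `A ⊗ M` against a functional on `A`. -/
def contrA {A M : Type*} [AddCommGroup A] [Module k A] [AddCommGroup M] [Module k M]
    (α : Module.Dual k A) : A ⊗[k] M →ₗ[k] M :=
  (TensorProduct.lid k M).toLinearMap ∘ₗ TensorProduct.map α LinearMap.id


@[simp] lemma contrA_tmul {A M : Type*} [AddCommGroup A] [Module k A] [AddCommGroup M]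
    [Module k M] (α : Module.Dual k A) (a : A) (m : M) :
    contrA k α (a ⊗ₜ[k] m) = α a • m := by
  simp [contrA]

lemma exists_repr_slices {A M : Type*} [AddCommGroup A] [Module k A] [AddCommGroup M]
    [Module k M] (p : A ⊗[k] M) :
    ∃ (n : ℕ) (e : Fin n → A) (w : Fin n → M),
      p = ∑ i, e i ⊗ₜ[k] w i ∧ ∀ i, ∃ α : Module.Dual k A, contrA k α p = w i := by
  classical
  set b := Basis.ofVectorSpace k A with hb
  set φ : A ⊗[k] M ≃ₗ[k] (Module.Basis.ofVectorSpaceIndex k A →₀ M) :=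
    (TensorProduct.congr b.repr (LinearEquiv.refl k M)).trans
      (TensorProduct.finsuppScalarLeft k M _) with hφ
  have key : ∀ (q : A ⊗[k] M) i, φ q i = contrA k (b.coord i) q := by
    intro q i
    induction q with
    | zero => simp
    | tmul a m => simp [hφ, contrA_tmul, Basis.coord_apply]
    | add x y hx hy => simp [map_add, hx, hy]
  have hsingle : ∀ (i) (m : M), φ.symm (Finsupp.single i m) = b i ⊗ₜ[k] m := by
    intro i m
    apply φ.injective
    rw [LinearEquiv.apply_symm_apply]
    ext j
    rw [key]
    simp only [contrA_tmul, Basis.coord_apply, Basis.repr_self]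
    rw [Finsupp.single_apply, Finsupp.single_apply]
    by_cases h : i = j <;> simp [h]
  set g := φ p with hg
  have hp : p = ∑ i ∈ g.support, b i ⊗ₜ[k] g i := by
    have h2 : φ.symm g = ∑ i ∈ g.support, b i ⊗ₜ[k] g i := by
      conv_lhs => rw [← Finsupp.sum_single g]
      rw [Finsupp.sum, map_sum]
      exact Finset.sum_congr rfl fun i _ => hsingle i (g i)
    rw [← h2, hg, LinearEquiv.symm_apply_apply]
  refine ⟨g.support.card, fun j => b (g.support.equivFin.symm j),
    fun j => g (g.support.equivFin.symm j), ?_, ?_⟩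
  · rw [hp, ← Finset.sum_coe_sort g.support (fun i => b i ⊗ₜ[k] g i)]
    exact (Equiv.sum_comp g.support.equivFin.symm
      (fun i : g.support => b i ⊗ₜ[k] g i)).symm
  · intro j
    exact ⟨b.coord _, (key p _).symm⟩

lemma contrA_zero {A M : Type*} [AddCommGroup A] [Module k A] [AddCommGroup M] [Module k M]
    (q : A ⊗[k] M) : contrA k (0 : Module.Dual k A) q = 0 := by
  induction q with
  | zero => simp
  | tmul a m => simp
  | add x y hx hy => simp only [map_add, hx, hy, add_zero]

section TwoFactors
variable {A B C : Type*} [AddCommGroup A] [Module k A] [AddCommGroup B] [Module k B]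
  [AddCommGroup C] [Module k C]

lemma tRank_eq_sRank_slice (p : A ⊗[k] (B ⊗[k] C)) :
    tRank k p
      = sRank k (Submodule.span k {x | ∃ α : Module.Dual k A, contrA k α p = x}) := by
  unfold tRank sRank
  apply congrArg sInf
  ext r
  constructor
  · rintro ⟨a, b, c, hp⟩
    refine ⟨b, c, ?_⟩
    rw [Submodule.span_le]
    rintro x ⟨α, rfl⟩
    rw [hp, map_sum]
    refine Submodule.sum_mem _ fun i _ => ?_
    rw [contrA_tmul]
    exact Submodule.smul_mem _ _ (Submodule.subset_span ⟨i, rfl⟩)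
  · rintro ⟨b, c, hW⟩
    obtain ⟨n, e, w, hp, hw⟩ := exists_repr_slices k p
    have hmem : ∀ i, w i ∈ Submodule.span k
        (Set.range fun j => b j ⊗ₜ[k] c j) := by
      intro i
      exact hW (Submodule.subset_span (hw i))
    choose co hco using fun i => (Submodule.mem_span_range_iff_exists_fun k).1 (hmem i)
    refine ⟨fun j => ∑ i, co i j • e i, b, c, ?_⟩
    rw [hp]
    refine Eq.symm ?_
    calc ∑ j, (∑ i, co i j • e i) ⊗ₜ[k] (b j ⊗ₜ[k] c j)
        = ∑ j, ∑ i, co i j • (e i ⊗ₜ[k] (b j ⊗ₜ[k] c j)) := by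
          refine Finset.sum_congr rfl fun j _ => ?_
          rw [sum_tmul]
          exact Finset.sum_congr rfl fun i _ => smul_tmul' _ _ _
      _ = ∑ i, ∑ j, co i j • (e i ⊗ₜ[k] (b j ⊗ₜ[k] c j)) := Finset.sum_comm
      _ = ∑ i, e i ⊗ₜ[k] w i := by
          refine Finset.sum_congr rfl fun i _ => ?_
          rw [← hco i, tmul_sum]
          exact Finset.sum_congr rfl fun j _ => (tmul_smul _ _ _).symm

end TwoFactors

variable (A' A'' B' B'' C' C'' : Type*)
  [AddCommGroup A'] [Module k A'] [AddCommGroup A''] [Module k A'']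
  [AddCommGroup B'] [Module k B'] [AddCommGroup B''] [Module k B'']
  [AddCommGroup C'] [Module k C'] [AddCommGroup C''] [Module k C'']

/-- Inclusion of `A'⊗B'⊗C'` into `(A'⊕A'')⊗(B'⊕B'')⊗(C'⊕C'')`. -/
def incl3L : (A' ⊗[k] (B' ⊗[k] C')) →ₗ[k] ((A' × A'') ⊗[k] ((B' × B'') ⊗[k] (C' × C''))) :=
  TensorProduct.map (LinearMap.inl k A' A'')
    (TensorProduct.map (LinearMap.inl k B' B'') (LinearMap.inl k C' C''))

/-- Inclusion of `A''⊗B''⊗C''` into `(A'⊕A'')⊗(B'⊕B'')⊗(C'⊕C'')`. -/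
def incl3R : (A'' ⊗[k] (B'' ⊗[k] C'')) →ₗ[k] ((A' × A'') ⊗[k] ((B' × B'') ⊗[k] (C' × C''))) :=
  TensorProduct.map (LinearMap.inr k A' A'')
    (TensorProduct.map (LinearMap.inr k B' B'') (LinearMap.inr k C' C''))

/-- Inclusion of `B'⊗C'` into `(B'⊕B'')⊗(C'⊕C'')`. -/
def incl2L : (B' ⊗[k] C') →ₗ[k] ((B' × B'') ⊗[k] (C' × C'')) :=
  TensorProduct.map (LinearMap.inl k B' B'') (LinearMap.inl k C' C'')

/-- Inclusion of `B''⊗C''` into `(B'⊕B'')⊗(C'⊕C'')`. -/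
def incl2R : (B'' ⊗[k] C'') →ₗ[k] ((B' × B'') ⊗[k] (C' × C'')) :=
  TensorProduct.map (LinearMap.inr k B' B'') (LinearMap.inr k C' C'')


lemma contrA_incl3L (α : Module.Dual k (A' × A'')) (q : A' ⊗[k] (B' ⊗[k] C')) :
    contrA k α (incl3L k A' A'' B' B'' C' C'' q)
      = incl2L k B' B'' C' C'' (contrA k (α ∘ₗ LinearMap.inl k A' A'') q) := by
  induction q with
  | zero => simp
  | tmul a m => simp [incl3L, incl2L]
  | add x y hx hy => simp only [map_add, hx, hy]

lemma contrA_incl3R (α : Module.Dual k (A' × A'')) (q : A'' ⊗[k] (B'' ⊗[k] C'')) :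
    contrA k α (incl3R k A' A'' B' B'' C' C'' q)
      = incl2R k B' B'' C' C'' (contrA k (α ∘ₗ LinearMap.inr k A' A'') q) := by
  induction q with
  | zero => simp
  | tmul a m => simp [incl3R, incl2R]
  | add x y hx hy => simp only [map_add, hx, hy]

lemma sliceSpan_sum (p' : A' ⊗[k] (B' ⊗[k] C')) (p'' : A'' ⊗[k] (B'' ⊗[k] C'')) :
    Submodule.span k {x | ∃ α : Module.Dual k (A' × A''),
        contrA k α (incl3L k A' A'' B' B'' C' C'' p'
          + incl3R k A' A'' B' B'' C' C'' p'') = x}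
      = Submodule.map (incl2L k B' B'' C' C'')
          (Submodule.span k {x | ∃ α : Module.Dual k A', contrA k α p' = x}) ⊔
        Submodule.map (incl2R k B' B'' C' C'')
          (Submodule.span k {x | ∃ α : Module.Dual k A'', contrA k α p'' = x}) := by
  apply le_antisymm
  · rw [Submodule.span_le]
    rintro x ⟨α, rfl⟩
    rw [map_add, contrA_incl3L, contrA_incl3R]
    exact Submodule.add_mem _
      (Submodule.mem_sup_left (Submodule.mem_map_of_mem (Submodule.subset_span ⟨_, rfl⟩)))
      (Submodule.mem_sup_right (Submodule.mem_map_of_mem (Submodule.subset_span ⟨_, rfl⟩)))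
  · apply sup_le
    · rw [Submodule.map_span, Submodule.span_le]
      rintro _ ⟨x, ⟨β, rfl⟩, rfl⟩
      apply Submodule.subset_span
      refine ⟨β ∘ₗ LinearMap.fst k A' A'', ?_⟩
      rw [map_add, contrA_incl3L, contrA_incl3R]
      have h1 : (β ∘ₗ LinearMap.fst k A' A'') ∘ₗ LinearMap.inl k A' A'' = β := by
        ext x; simp
      have h2 : (β ∘ₗ LinearMap.fst k A' A'') ∘ₗ LinearMap.inr k A' A''
          = (0 : Module.Dual k A'') := by
        ext x; simp
      rw [h1, h2, contrA_zero, map_zero, add_zero]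
    · rw [Submodule.map_span, Submodule.span_le]
      rintro _ ⟨x, ⟨β, rfl⟩, rfl⟩
      apply Submodule.subset_span
      refine ⟨β ∘ₗ LinearMap.snd k A' A'', ?_⟩
      rw [map_add, contrA_incl3L, contrA_incl3R]
      have h1 : (β ∘ₗ LinearMap.snd k A' A'') ∘ₗ LinearMap.inr k A' A'' = β := by
        ext x; simp
      have h2 : (β ∘ₗ LinearMap.snd k A' A'') ∘ₗ LinearMap.inl k A' A''
          = (0 : Module.Dual k A') := by
        ext x; simp
      rw [h1, h2, contrA_zero, map_zero, zero_add]

/-- With `W' = p'((A')*) ⊆ B'⊗C'` and `W'' = p''((A'')*) ⊆ B''⊗C''`, the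
additivity of the rank holds for `p = p'⊕p''` if and only if it holds for `W = W'⊕W''`. -/
theorem rank_additivity_tensor_iff_slice_spaces
    (p' : A' ⊗[k] (B' ⊗[k] C')) (p'' : A'' ⊗[k] (B'' ⊗[k] C'')) :
    tRank k (incl3L k A' A'' B' B'' C' C'' p' + incl3R k A' A'' B' B'' C' C'' p'')
        = tRank k p' + tRank k p''
      ↔
    sRank k (Submodule.map (incl2L k B' B'' C' C'')
          (Submodule.span k {x | ∃ α : Module.Dual k A', contrA k α p' = x}) ⊔
        Submodule.map (incl2R k B' B'' C' C'')
          (Submodule.span k {x | ∃ α : Module.Dual k A'', contrA k α p'' = x}))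
      = sRank k (Submodule.span k {x | ∃ α : Module.Dual k A', contrA k α p' = x})
        + sRank k (Submodule.span k {x | ∃ α : Module.Dual k A'', contrA k α p'' = x}) := by
  
  rw [tRank_eq_sRank_slice, tRank_eq_sRank_slice, tRank_eq_sRank_slice,
    sliceSpan_sum]
end
end

section
/- Let W ⊆ B⊗C be a linear subspace over a field k with R(W) = r, and let w ∈ W be a nonzero element. Then: (1) there exists a linear subspace W̃ ⊆ W with W̃ ⊕ span(w) = W and R(W̃) ≤ r − 1; (2) if in addition the rank of w as a matrix is 1, then for every subspace W̃ with W̃ ⊕ span(w) = W one has R(W̃) ≥ r − 1. -/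
open TensorProduct Module

noncomputable section

variable (k : Type*) [Field k]

/-- The rank of a two-way tensor (matrix) `w ∈ B⊗C`: the minimal number `r` of simple
tensors summing to `w`. -/
def mRank {B C : Type*} [AddCommGroup B] [Module k B]
    [AddCommGroup C] [Module k C] (w : B ⊗[k] C) : ℕ :=
  sInf {r : ℕ | ∃ (b : Fin r → B) (c : Fin r → C), w = ∑ i, b i ⊗ₜ[k] c i}

section Aux

variable {k} {B C : Type*} [AddCommGroup B] [Module k B] [AddCommGroup C] [Module k C]

/-- Every tensor is a finite sum of simple tensors. -/
lemma aux_decomp (x : B ⊗[k] C) :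
    ∃ (n : ℕ) (b : Fin n → B) (c : Fin n → C), x = ∑ i, b i ⊗ₜ[k] c i := by
  induction x with
  | zero => exact ⟨0, Fin.elim0, Fin.elim0, by simp⟩
  | tmul b c => exact ⟨1, fun _ => b, fun _ => c, by simp⟩
  | add x y hx hy =>
      obtain ⟨m, b1, c1, rfl⟩ := hx
      obtain ⟨n, b2, c2, rfl⟩ := hy
      refine ⟨m + n, Fin.append b1 b2, Fin.append c1 c2, ?_⟩
      rw [Fin.sum_univ_add]
      simp

lemma aux_combine {m n : ℕ} (b1 : Fin m → B) (c1 : Fin m → C) (b2 : Fin n → B)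
    (c2 : Fin n → C) :
    Submodule.span k (Set.range fun i => b1 i ⊗ₜ[k] c1 i) ⊔
      Submodule.span k {∑ i, b2 i ⊗ₜ[k] c2 i} ≤
      Submodule.span k
        (Set.range fun i : Fin (m + n) => Fin.append b1 b2 i ⊗ₜ[k] Fin.append c1 c2 i) := by
  apply sup_le
  · rw [Submodule.span_le]
    rintro _ ⟨i, rfl⟩
    exact Submodule.subset_span ⟨Fin.castAdd n i, by simp⟩
  · rw [Submodule.span_singleton_le_iff_mem]
    refine Submodule.sum_mem _ fun i _ => ?_
    exact Submodule.subset_span ⟨Fin.natAdd m i, by simp⟩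

lemma aux_dual {V : Type*} [AddCommGroup V] [Module k V] (T : Submodule k V) {v : V}
    (hv : v ∉ T) : ∃ f : Module.Dual k V, f v = 1 ∧ T ≤ LinearMap.ker f := by
  have h0 : T.mkQ v ≠ 0 := by
    simpa [Submodule.Quotient.mk_eq_zero] using hv
  obtain ⟨φ, hφ⟩ : ∃ φ : Module.Dual k (V ⧸ T), φ (T.mkQ v) ≠ 0 := by
    by_contra h
    push_neg at h
    exact h0 ((Module.forall_dual_apply_eq_zero_iff k _).mp h)
  refine ⟨(φ (T.mkQ v))⁻¹ • (φ ∘ₗ T.mkQ), ?_, ?_⟩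
  · simp only [LinearMap.smul_apply, LinearMap.coe_comp, Function.comp_apply, smul_eq_mul]
    exact inv_mul_cancel₀ hφ
  · intro t ht
    have : T.mkQ t = 0 := (Submodule.Quotient.mk_eq_zero T).mpr ht
    simp [LinearMap.mem_ker, this]

lemma aux_compl (W : Submodule k (B ⊗[k] C)) {w : B ⊗[k] C} (hwW : w ∈ W)
    (f : Module.Dual k (B ⊗[k] C)) (hf : f w = 1) :
    (W ⊓ LinearMap.ker f) ⊓ Submodule.span k {w} = ⊥ ∧
      (W ⊓ LinearMap.ker f) ⊔ Submodule.span k {w} = W := by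
  constructor
  · rw [eq_bot_iff]
    intro x hx
    rw [Submodule.mem_inf, Submodule.mem_inf] at hx
    obtain ⟨⟨-, hker⟩, hx⟩ := hx
    obtain ⟨a, rfl⟩ := Submodule.mem_span_singleton.mp hx
    rw [LinearMap.mem_ker] at hker
    have ha : a = 0 := by simpa [hf] using hker
    simp [ha]
  · apply le_antisymm
    · exact sup_le inf_le_left ((Submodule.span_singleton_le_iff_mem _ _).mpr hwW)
    · intro u hu
      have h1 : u - f u • w ∈ W ⊓ LinearMap.ker f := by
        rw [Submodule.mem_inf]
        refine ⟨W.sub_mem hu (W.smul_mem _ hwW), ?_⟩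
        rw [LinearMap.mem_ker]
        simp [hf]
      have h2 : f u • w ∈ Submodule.span k {w} :=
        Submodule.smul_mem _ _ (Submodule.mem_span_singleton_self w)
      simpa using Submodule.add_mem_sup h1 h2

end Aux

/-- Let `W ⊆ B⊗C` with `R(W) = r` and let `w ∈ W` be nonzero.  Then
(1) there exists a complement `W̃` of `span(w)` in `W` with `R(W̃) ≤ r − 1`;
(2) if moreover `w` has rank one, then every complement `W̃` of `span(w)` in `W`
satisfies `R(W̃) ≥ r − 1`. -/
theorem substitution_method_for_subspaces
    (B C : Type*) [AddCommGroup B] [Module k B] [AddCommGroup C] [Module k C]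
    (W : Submodule k (B ⊗[k] C)) (r : ℕ) (hr : sRank k W = r)
    (w : B ⊗[k] C) (hwW : w ∈ W) (hw : w ≠ 0) :
    (∃ Wt : Submodule k (B ⊗[k] C), Wt ≤ W ∧ Wt ⊓ Submodule.span k {w} = ⊥ ∧
      Wt ⊔ Submodule.span k {w} = W ∧ sRank k Wt ≤ r - 1) ∧
    (mRank k w = 1 →
      ∀ Wt : Submodule k (B ⊗[k] C), Wt ≤ W → Wt ⊓ Submodule.span k {w} = ⊥ →
        Wt ⊔ Submodule.span k {w} = W → r - 1 ≤ sRank k Wt) := by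
  classical
  set S : Set ℕ := {n : ℕ | ∃ (b : Fin n → B) (c : Fin n → C),
    W ≤ Submodule.span k (Set.range fun i => b i ⊗ₜ[k] c i)} with hS
  have hsr : sRank k W = sInf S := rfl
  constructor
  · -- Part 1
    by_cases hne : S.Nonempty
    · have hmem : r ∈ S := by rw [← hr, hsr]; exact Nat.sInf_mem hne
      rcases r with _ | r'
      · exfalso
        obtain ⟨b, c, hle⟩ := hmem
        have h0 : w ∈ Submodule.span k (Set.range fun i : Fin 0 => b i ⊗ₜ[k] c i) := hle hwW
        rw [Set.range_eq_empty, Submodule.span_empty, Submodule.mem_bot] at h0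
        exact hw h0
      · obtain ⟨b, c, hWle⟩ := hmem
        obtain ⟨lam, hlam⟩ := (Submodule.mem_span_range_iff_exists_fun k).mp (hWle hwW)
        have hj : ∃ j, lam j ≠ 0 := by
          by_contra h
          push_neg at h
          apply hw
          rw [← hlam]
          simp [h]
        obtain ⟨j, hj⟩ := hj
        set T := Submodule.span k (Set.range fun i : Fin r' =>
          b (j.succAbove i) ⊗ₜ[k] c (j.succAbove i)) with hT
        have hsum : w = lam j • (b j ⊗ₜ[k] c j) +
            ∑ i : Fin r', lam (j.succAbove i) •
              (b (j.succAbove i) ⊗ₜ[k] c (j.succAbove i)) := by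
          rw [← hlam, Fin.sum_univ_succAbove (fun i => lam i • (b i ⊗ₜ[k] c i)) j]
        have hWle2 : W ≤ T ⊔ Submodule.span k {w} := by
          refine le_trans hWle ?_
          rw [Submodule.span_le]
          rintro _ ⟨i, rfl⟩
          simp only [SetLike.mem_coe]
          by_cases hij : i = j
          · rw [hij]
            have hmemsub : w - ∑ i : Fin r', lam (j.succAbove i) •
                (b (j.succAbove i) ⊗ₜ[k] c (j.succAbove i)) ∈
                T ⊔ Submodule.span k {w} :=
              Submodule.sub_mem _
                (Submodule.mem_sup_right (Submodule.mem_span_singleton_self w))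
                (Submodule.mem_sup_left (Submodule.sum_mem _ fun i _ =>
                  Submodule.smul_mem _ _ (Submodule.subset_span ⟨i, rfl⟩)))
            have heq : b j ⊗ₜ[k] c j = (lam j)⁻¹ •
                (w - ∑ i : Fin r', lam (j.succAbove i) •
                  (b (j.succAbove i) ⊗ₜ[k] c (j.succAbove i))) := by
              rw [hsum, add_sub_cancel_right, smul_smul, inv_mul_cancel₀ hj, one_smul]
            rw [heq]
            exact Submodule.smul_mem _ _ hmemsub
          · obtain ⟨i', hi'⟩ := Fin.exists_succAbove_eq hij
            exact Submodule.mem_sup_left (Submodule.subset_span ⟨i', by dsimp only; rw [hi']⟩)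
        have hwT : w ∉ T := by
          intro hwT
          have hle : W ≤ T :=
            hWle2.trans (sup_le le_rfl ((Submodule.span_singleton_le_iff_mem _ _).mpr hwT))
          have : r' ∈ S := ⟨_, _, hle⟩
          have := Nat.sInf_le this
          rw [← hsr, hr] at this
          omega
        obtain ⟨f, hf1, hfT⟩ := aux_dual T hwT
        obtain ⟨hinf, hsup⟩ := aux_compl W hwW f hf1
        refine ⟨W ⊓ LinearMap.ker f, inf_le_left, hinf, hsup, ?_⟩
        have hWtle : W ⊓ LinearMap.ker f ≤ T := by
          intro u hu
          rw [Submodule.mem_inf] at hu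
          obtain ⟨huW, huk⟩ := hu
          obtain ⟨y, hy, z, hz, rfl⟩ := Submodule.mem_sup.mp (hWle2 huW)
          obtain ⟨a, rfl⟩ := Submodule.mem_span_singleton.mp hz
          have hfy : f y = 0 := hfT hy
          rw [LinearMap.mem_ker] at huk
          have ha : a = 0 := by simpa [hfy, hf1] using huk
          simpa [ha] using hy
        have hmem' : r' ∈ {n : ℕ | ∃ (b : Fin n → B) (c : Fin n → C),
            W ⊓ LinearMap.ker f ≤
              Submodule.span k (Set.range fun i => b i ⊗ₜ[k] c i)} := ⟨_, _, hWtle⟩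
        have := Nat.sInf_le hmem'
        simpa [sRank] using this
    · have hr0 : r = 0 := by
        rw [← hr, hsr, Set.not_nonempty_iff_eq_empty.mp hne, Nat.sInf_empty]
      have hwb : w ∉ (⊥ : Submodule k (B ⊗[k] C)) := by simpa using hw
      obtain ⟨f, hf1, -⟩ := aux_dual ⊥ hwb
      obtain ⟨hinf, hsup⟩ := aux_compl W hwW f hf1
      refine ⟨W ⊓ LinearMap.ker f, inf_le_left, hinf, hsup, ?_⟩
      have hempty : {n : ℕ | ∃ (b : Fin n → B) (c : Fin n → C),
          W ⊓ LinearMap.ker f ≤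
            Submodule.span k (Set.range fun i => b i ⊗ₜ[k] c i)} = ∅ := by
        rw [Set.eq_empty_iff_forall_notMem]
        rintro n ⟨b, c, hle⟩
        obtain ⟨n2, b2, c2, hw2⟩ := aux_decomp w
        refine hne ⟨n + n2, Fin.append b b2, Fin.append c c2, ?_⟩
        rw [← hsup]
        refine le_trans (sup_le_sup hle le_rfl) ?_
        rw [hw2]
        exact aux_combine b c b2 c2
      have h0 : sRank k (W ⊓ LinearMap.ker f) = 0 := by
        unfold sRank
        rw [hempty, Nat.sInf_empty]
      omega
  · intro hm1 Wt hWtW hinf hsup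
    by_cases hne : S.Nonempty
    · have hne' : {n : ℕ | ∃ (b : Fin n → B) (c : Fin n → C),
          Wt ≤ Submodule.span k (Set.range fun i => b i ⊗ₜ[k] c i)}.Nonempty := by
        obtain ⟨n, b, c, hle⟩ := hne
        exact ⟨n, b, c, hWtW.trans hle⟩
      have hmemt : sRank k Wt ∈ {n : ℕ | ∃ (b : Fin n → B) (c : Fin n → C),
          Wt ≤ Submodule.span k (Set.range fun i => b i ⊗ₜ[k] c i)} :=
        Nat.sInf_mem hne'
      obtain ⟨b, c, hle⟩ := hmemt
      have hMne : {n : ℕ | ∃ (b : Fin n → B) (c : Fin n → C),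
          w = ∑ i, b i ⊗ₜ[k] c i}.Nonempty := by
        obtain ⟨n, b2, c2, hw2⟩ := aux_decomp w
        exact ⟨n, b2, c2, hw2⟩
      have h1M : (1 : ℕ) ∈ {n : ℕ | ∃ (b : Fin n → B) (c : Fin n → C),
          w = ∑ i, b i ⊗ₜ[k] c i} := by
        rw [← hm1]
        exact Nat.sInf_mem hMne
      obtain ⟨b2, c2, hw2⟩ := h1M
      have hSmem : sRank k Wt + 1 ∈ S := by
        refine ⟨Fin.append b b2, Fin.append c c2, ?_⟩
        rw [← hsup]
        refine le_trans (sup_le_sup hle le_rfl) ?_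
        rw [hw2]
        exact aux_combine b c b2 c2
      have hfin := Nat.sInf_le hSmem
      rw [← hsr, hr] at hfin
      omega
    · have hr0 : r = 0 := by
        rw [← hr, hsr, Set.not_nonempty_iff_eq_empty.mp hne, Nat.sInf_empty]
      simp [hr0]
end
end
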